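/- Let g : ℕ → ℕ be weakly increasing, k > 2 with √(g(μ))/2 ≥ k for μ = μ_g(k) := min{t : k ≤ ⌊√(g(t))/2⌋}. Define (f_g)_1(n)=n+1, (f_g)_{i+1}(n) = (f_g)_i^(⌊√(g(n))/2⌋)(n), and semi-metrics (d_g)_i(m,n) = |{l : m < (f_g)_i^(l)(μ) ≤ n}| for m,n ≥ μ. Then for all n > m ≥ μ: D_g(m,n) ≤ √(g(m))/2, where I_g(m,n) is the greatest i with (d_g)_i(m,n) > 0 and D_g(m,n) = (d_g)_{I_g(m,n)}(m,n). -/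
import Mathlib

/-- `(f_g)_i`: `(f_g)_1 (n) = n + 1`, `(f_g)_{i+1} (n) = (f_g)_i^(⌊√(g n)/2⌋) (n)`. -/
def fg (g : ℕ → ℕ) : ℕ → ℕ → ℕ
  | 0, n => n
  | 1, n => n + 1
  | (i + 2), n => (fg g (i + 1))^[Nat.sqrt (g n) / 2] n

/-- The semi-metric `(d_g)_i(m,n) = |{l : m < (f_g)_i^(l)(μ) ≤ n}|`. -/
noncomputable def dg (g : ℕ → ℕ) (μ i m n : ℕ) : ℕ :=
  {l : ℕ | m < (fg g i)^[l] μ ∧ (fg g i)^[l] μ ≤ n}.ncard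

/-- `I_g(m,n)`: the greatest `i` with `(d_g)_i(m,n) > 0`. -/
noncomputable def Ig (g : ℕ → ℕ) (μ m n : ℕ) : ℕ := sSup {i | 0 < dg g μ i m n}

/-- `D_g(m,n) = (d_g)_{I_g(m,n)}(m,n)`. -/
noncomputable def Dg (g : ℕ → ℕ) (μ m n : ℕ) : ℕ := dg g μ (Ig g μ m n) m n

/-- The pairing function `Pr(m,n) = C(m+n+1,2) + n`. -/
def Pr (m n : ℕ) : ℕ := Nat.choose (m + n + 1) 2 + n

/-- The coloring `c_g(m,n) = Pr(I_g(m,n), D_g(m,n))`. -/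
noncomputable def cg (g : ℕ → ℕ) (μ m n : ℕ) : ℕ := Pr (Ig g μ m n) (Dg g μ m n)

section Aux

variable {g : ℕ → ℕ} {μ : ℕ}

private lemma aux_iter_add {F : ℕ → ℕ} (h : ∀ x, μ ≤ x → x < F x) :
    ∀ (l : ℕ) (x : ℕ), μ ≤ x → x + l ≤ F^[l] x := by
  intro l
  induction l with
  | zero => intro x hx; simp
  | succ l ih =>
    intro x hx
    rw [Function.iterate_succ_apply']
    have h1 := ih x hx
    have h2 : μ ≤ F^[l] x := by omega
    have := h _ h2
    omega

private lemma aux_iter_mono {F : ℕ → ℕ} (h : ∀ x, μ ≤ x → x < F x)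
    {l l' : ℕ} (hll : l ≤ l') {x : ℕ} (hx : μ ≤ x) : F^[l] x ≤ F^[l'] x := by
  have h1 := aux_iter_add h l x hx
  have h2 : μ ≤ F^[l] x := by omega
  have h3 := aux_iter_add h (l' - l) (F^[l] x) h2
  have hl : l' = (l' - l) + l := by omega
  rw [hl, Function.iterate_add_apply]
  omega

private lemma aux_fg_lt (hc : ∀ x, μ ≤ x → 1 ≤ Nat.sqrt (g x) / 2) :
    ∀ i, 1 ≤ i → ∀ x, μ ≤ x → x < fg g i x := by
  intro i
  induction i with
  | zero => omega
  | succ i ih =>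
    intro _ x hx
    match i, ih with
    | 0, _ => exact Nat.lt_succ_self x
    | j+1, ih =>
      have hstep : ∀ y, μ ≤ y → y < fg g (j+1) y := fun y hy => ih (by omega) y hy
      have h1 := aux_iter_add hstep (Nat.sqrt (g x) / 2) x hx
      have h2 := hc x hx
      show x < (fg g (j+1))^[Nat.sqrt (g x) / 2] x
      omega

private lemma aux_fg_mu (hc : ∀ x, μ ≤ x → 2 ≤ Nat.sqrt (g x) / 2) :
    ∀ i, 1 ≤ i → μ + i ≤ fg g i μ := by
  have hc1 : ∀ x, μ ≤ x → 1 ≤ Nat.sqrt (g x) / 2 := fun x hx => by have := hc x hx; omega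
  intro i
  induction i with
  | zero => omega
  | succ i ih =>
    intro _
    match i, ih with
    | 0, _ => exact le_refl (μ + 1)
    | j+1, ih =>
      have hj := ih (by omega)
      have hstep : ∀ y, μ ≤ y → y < fg g (j+1) y := aux_fg_lt hc1 (j+1) (by omega)
      have hc2 := hc μ le_rfl
      set c := Nat.sqrt (g μ) / 2 with hcdef
      have hμF : μ ≤ fg g (j+1) μ := le_of_lt (hstep μ le_rfl)
      have h1 := aux_iter_add hstep (c - 1) (fg g (j+1) μ) hμF
      have heq : (fg g (j+1))^[c] μ = (fg g (j+1))^[c-1] (fg g (j+1) μ) := by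
        conv_lhs => rw [show c = (c-1) + 1 by omega]
        rw [Function.iterate_add_apply, Function.iterate_one]
      show μ + (j+1+1) ≤ (fg g (j+1))^[c] μ
      rw [heq]
      omega

private lemma aux_orbit_sub (g : ℕ → ℕ) (μ : ℕ) (j : ℕ) :
    ∀ l, ∃ t, (fg g (j+2))^[l] μ = (fg g (j+1))^[t] μ := by
  intro l
  induction l with
  | zero => exact ⟨0, rfl⟩
  | succ l ih =>
    obtain ⟨t, ht⟩ := ih
    refine ⟨Nat.sqrt (g ((fg g (j+1))^[t] μ)) / 2 + t, ?_⟩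
    rw [Function.iterate_succ_apply', ht, Function.iterate_add_apply]
    rfl

end Aux

theorem stmt12 (g : ℕ → ℕ) (hg : Monotone g) (k μ : ℕ) (hk : 2 < k)
    (hμ : k ≤ Nat.sqrt (g μ) / 2) (hμmin : ∀ t, k ≤ Nat.sqrt (g t) / 2 → μ ≤ t)
    (m n : ℕ) (hm : μ ≤ m) (hmn : m < n) :
    (Dg g μ m n : ℝ) ≤ Real.sqrt (g m) / 2 := by
  have hc : ∀ x, μ ≤ x → k ≤ Nat.sqrt (g x) / 2 := fun x hx =>
    le_trans hμ (Nat.div_le_div_right (Nat.sqrt_le_sqrt (hg hx)))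
  have hc1 : ∀ x, μ ≤ x → 1 ≤ Nat.sqrt (g x) / 2 := fun x hx => by have := hc x hx; omega
  have hc2 : ∀ x, μ ≤ x → 2 ≤ Nat.sqrt (g x) / 2 := fun x hx => by have := hc x hx; omega
  have horb : ∀ i, 1 ≤ i → ∀ l, μ + l ≤ (fg g i)^[l] μ := fun i hi l =>
    aux_iter_add (aux_fg_lt hc1 i hi) l μ le_rfl
  set S : Set ℕ := {i | 0 < dg g μ i m n} with hSdef
  have hfin : ∀ i, 1 ≤ i →
      {l : ℕ | m < (fg g i)^[l] μ ∧ (fg g i)^[l] μ ≤ n}.Finite := by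
    intro i hi
    apply Set.Finite.subset (Set.finite_Iic (n - μ))
    intro l hl
    have := horb i hi l
    simp only [Set.mem_setOf_eq] at hl
    simp only [Set.mem_Iic]
    omega
  have hiter1 : ∀ l, (fg g 1)^[l] μ = μ + l := by
    intro l
    induction l with
    | zero => rfl
    | succ l ih => rw [Function.iterate_succ_apply', ih]; rfl
  have hS1 : 1 ∈ S := by
    simp only [hSdef, Set.mem_setOf_eq, dg]
    rw [Set.ncard_pos (hfin 1 le_rfl)]
    exact ⟨m + 1 - μ, by simp only [Set.mem_setOf_eq, hiter1]; omega⟩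
  have hSb : ∀ i ∈ S, i ≤ n - μ := by
    intro i hi
    simp only [hSdef, Set.mem_setOf_eq, dg] at hi
    obtain ⟨l, hl1, hl2⟩ := Set.nonempty_of_ncard_ne_zero hi.ne'
    match i with
    | 0 =>
      rw [Function.iterate_fixed rfl l] at hl1
      omega
    | i+1 =>
      have hl0 : 1 ≤ l := by
        rcases Nat.eq_zero_or_pos l with h | h
        · subst h; simp at hl1; omega
        · exact h
      have h1 : fg g (i+1) μ ≤ (fg g (i+1))^[l] μ := by
        have := aux_iter_add (aux_fg_lt hc1 (i+1) (by omega)) (l - 1) (fg g (i+1) μ)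
          (le_of_lt (aux_fg_lt hc1 (i+1) (by omega) μ le_rfl))
        rw [show l = (l-1) + 1 by omega, Function.iterate_add_apply, Function.iterate_one]
        omega
      have h2 := aux_fg_mu hc2 (i+1) (by omega)
      omega
  have hSbdd : BddAbove S := ⟨n - μ, hSb⟩
  have hIS : Ig g μ m n = sSup S := rfl
  have hImem : Ig g μ m n ∈ S := hIS ▸ Nat.sSup_mem ⟨1, hS1⟩ hSbdd
  have hI1 : 1 ≤ Ig g μ m n := hIS ▸ le_csSup hSbdd hS1
  have hd0 : dg g μ (Ig g μ m n + 1) m n = 0 := by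
    by_contra h
    have h1 : Ig g μ m n + 1 ∈ S := Nat.pos_of_ne_zero h
    have h2 := le_csSup hSbdd h1
    omega
  obtain ⟨j, hj⟩ : ∃ j, Ig g μ m n = j + 1 := ⟨Ig g μ m n - 1, by omega⟩
  rw [hj] at hd0
  have hE : ∀ l, ¬(m < (fg g (j+2))^[l] μ ∧ (fg g (j+2))^[l] μ ≤ n) := by
    intro l hl
    have h1 : {l : ℕ | m < (fg g (j+2))^[l] μ ∧ (fg g (j+2))^[l] μ ≤ n} = ∅ :=
      (Set.ncard_eq_zero (hfin (j+2) (by omega))).mp hd0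
    have h2 : l ∈ {l : ℕ | m < (fg g (j+2))^[l] μ ∧ (fg g (j+2))^[l] μ ≤ n} := hl
    rw [h1] at h2
    exact h2
  -- largest (j+2)-orbit point ≤ m
  classical
  set P : ℕ → Prop := fun l => (fg g (j+2))^[l] μ ≤ m with hPdef
  set p := Nat.findGreatest P (m - μ) with hpdef
  have hP0 : P 0 := by
    show (fg g (j+2))^[0] μ ≤ m
    simpa using hm
  have hp1 : (fg g (j+2))^[p] μ ≤ m := by
    have h0 : P p := Nat.findGreatest_spec (Nat.zero_le _) hP0
    exact h0
  have hp2 : m < (fg g (j+2))^[p+1] μ := by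
    rcases le_or_gt (p + 1) (m - μ) with h | h
    · have h2 : ¬ P (p + 1) := Nat.findGreatest_is_greatest (Nat.lt_succ_self p) h
      have h3 : ¬ ((fg g (j+2))^[p+1] μ ≤ m) := h2
      omega
    · have := horb (j+2) (by omega) (p+1)
      omega
  have hpn : n < (fg g (j+2))^[p+1] μ := by
    have := hE (p + 1)
    omega
  obtain ⟨t, ht⟩ := aux_orbit_sub g μ j p
  have hxμ : μ ≤ (fg g (j+2))^[p] μ := by have := horb (j+2) (by omega) p; omega
  have hnext : (fg g (j+2))^[p+1] μ =
      (fg g (j+1))^[Nat.sqrt (g ((fg g (j+2))^[p] μ)) / 2 + t] μ := by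
    rw [Function.iterate_succ_apply', ht, Function.iterate_add_apply]
    rfl
  set c := Nat.sqrt (g ((fg g (j+2))^[p] μ)) / 2 with hcdef
  have hsub : {l : ℕ | m < (fg g (j+1))^[l] μ ∧ (fg g (j+1))^[l] μ ≤ n} ⊆
      Set.Ioo t (c + t) := by
    intro l hl
    simp only [Set.mem_setOf_eq] at hl
    have hmono := aux_fg_lt hc1 (j+1) (by omega)
    simp only [Set.mem_Ioo]
    constructor
    · by_contra h
      push_neg at h
      have := aux_iter_mono hmono h (le_refl μ)
      rw [← ht] at this
      omega
    · by_contra h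
      push_neg at h
      have h2 : (fg g (j+1))^[c + t] μ ≤ (fg g (j+1))^[l] μ :=
        aux_iter_mono hmono h (le_refl μ)
      omega
  have hD : dg g μ (j+1) m n ≤ c := by
    have h1 : dg g μ (j+1) m n ≤ (Set.Ioo t (c + t)).ncard := by
      apply Set.ncard_le_ncard hsub
    rw [← Finset.coe_Ioo, Set.ncard_coe_finset, Nat.card_Ioo] at h1
    omega
  have hcm : c ≤ Nat.sqrt (g m) / 2 :=
    Nat.div_le_div_right (Nat.sqrt_le_sqrt (hg hp1))
  have hcast : ((Nat.sqrt (g m) / 2 : ℕ) : ℝ) ≤ Real.sqrt (g m) / 2 := by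
    have h1 : ((Nat.sqrt (g m) / 2 : ℕ) : ℝ) ≤ (Nat.sqrt (g m) : ℝ) / 2 := by
      rw [le_div_iff₀ (by norm_num)]
      exact_mod_cast Nat.cast_le.mpr (Nat.div_mul_le_self (Nat.sqrt (g m)) 2)
    have h2 : (Nat.sqrt (g m) : ℝ) ≤ Real.sqrt (g m) := by
      rw [show ((Nat.sqrt (g m) : ℝ)) = Real.sqrt ((Nat.sqrt (g m))^2) by
        rw [Real.sqrt_sq (by positivity)]]
      apply Real.sqrt_le_sqrt
      exact_mod_cast Nat.sqrt_le' (g m)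
    linarith
  have hfinal : Dg g μ m n ≤ Nat.sqrt (g m) / 2 := by
    show dg g μ (Ig g μ m n) m n ≤ _
    rw [hj]
    omega
  calc (Dg g μ m n : ℝ) ≤ ((Nat.sqrt (g m) / 2 : ℕ) : ℝ) := by exact_mod_cast hfinal
    _ ≤ Real.sqrt (g m) / 2 := hcast
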